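/- arXiv:2311.17262 — 3 statements merged into one kernel-verified Lean document; each statement's English description precedes it below -/
import Mathlib

section
/- Let D ≥ 1. If a binary m×n matrix M is D̄-separable, then M is (D−1)-disjunct. -/
/-- A binary `m × n` matrix is `D`-disjunct if for every column `j` and every set `T` of at
most `D` other columns, there is a row with a `1` in column `j` and `0` in every column of `T`. -/
def Disjunct {m n : ℕ} (M : Matrix (Fin m) (Fin n) (ZMod 2)) (D : ℕ) : Prop :=
  ∀ j : Fin n, ∀ T : Finset (Fin n), j ∉ T → T.card ≤ D →
    ∃ i : Fin m, M i j = 1 ∧ ∀ j' ∈ T, M i j' = 0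

/-- A binary `m × n` matrix is `D̄`-separable if no two distinct subsets of columns, each of
size at most `D`, have the same componentwise Boolean sum (OR). -/
def BarSeparable {m n : ℕ} (M : Matrix (Fin m) (Fin n) (ZMod 2)) (D : ℕ) : Prop :=
  ∀ S₁ S₂ : Finset (Fin n), S₁.card ≤ D → S₂.card ≤ D →
    (∀ i : Fin m, (∃ j ∈ S₁, M i j = 1) ↔ (∃ j ∈ S₂, M i j = 1)) → S₁ = S₂

theorem barSeparable_implies_disjunct {m n D : ℕ} (hD : 1 ≤ D)
    (M : Matrix (Fin m) (Fin n) (ZMod 2)) (hM : BarSeparable M D) :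
    Disjunct M (D - 1) := by
  intro j T hjT hTcard
  by_contra h
  push_neg at h
  have key := hM (insert j T) T
    (by
      rw [Finset.card_insert_of_notMem hjT]
      omega)
    (by omega)
    (by
      intro i
      constructor
      · rintro ⟨j', hj', hval⟩
        rcases Finset.mem_insert.mp hj' with rfl | hj'T
        · obtain ⟨j'', hj''T, hj''⟩ := h i hval
          have hone : ∀ x : ZMod 2, x ≠ 0 → x = 1 := by decide
          exact ⟨j'', hj''T, hone _ hj''⟩
        · exact ⟨j', hj'T, hval⟩
      · rintro ⟨j', hj', hval⟩
        exact ⟨j', Finset.mem_insert_of_mem hj', hval⟩)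
  exact hjT (key ▸ Finset.mem_insert_self j T)
end

section
/- Let M be an m×n binary matrix that is D-disjunct, regarded as a matrix over F_2. Then every nonzero vector x ∈ F_2^n with M x = 0 has Hamming weight at least D + 2; that is, the minimum distance of the code C(M) is at least D + 2. -/
/-- If `M` is `D`-disjunct, then every nonzero vector in the `F₂`-kernel of `M` has Hamming
weight at least `D + 2`. -/
theorem disjunct_min_distance {m n D : ℕ} (M : Matrix (Fin m) (Fin n) (ZMod 2))
    (hM : Disjunct M D) (x : Fin n → ZMod 2) (hx : x ≠ 0) (hker : M.mulVec x = 0) :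
    D + 2 ≤ (Finset.univ.filter (fun j => x j ≠ 0)).card := by
  set S := Finset.univ.filter (fun j => x j ≠ 0) with hS
  by_contra hcard
  push_neg at hcard
  have hle : S.card ≤ D + 1 := Nat.lt_succ_iff.mp hcard
  obtain ⟨j, hj⟩ : ∃ j, x j ≠ 0 := by
    by_contra h
    push_neg at h
    exact hx (funext h)
  have hjS : j ∈ S := by simp [hS, hj]
  have hT : (S.erase j).card ≤ D := by
    have := Finset.card_erase_of_mem hjS
    omega
  obtain ⟨i, hi1, hi0⟩ := hM j (S.erase j) (Finset.notMem_erase j S) hT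
  have hsum : M.mulVec x i = x j := by
    rw [Matrix.mulVec, dotProduct]
    rw [Finset.sum_eq_single j]
    · rw [hi1, one_mul]
    · intro b _ hb
      by_cases hxb : x b = 0
      · rw [hxb, mul_zero]
      · have : b ∈ S.erase j := Finset.mem_erase.mpr ⟨hb, by simp [hS, hxb]⟩
        rw [hi0 b this, zero_mul]
    · intro h; exact absurd (Finset.mem_univ j) h
  rw [hker] at hsum
  exact hj hsum.symm
end

section
/- Let M be an m×n binary matrix that is D-disjunct. Then every nonempty stopping set of M has size at least D + 2; that is, the stopping distance of M is at least D + 2. -/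
/-- A stopping set of a binary matrix is a set `V` of columns such that no row has exactly
one `1` among the columns of `V`. -/
def IsStoppingSet {m n : ℕ} (M : Matrix (Fin m) (Fin n) (ZMod 2)) (V : Finset (Fin n)) : Prop :=
  ∀ i : Fin m, (V.filter (fun j => M i j = 1)).card ≠ 1

/-- If `M` is `D`-disjunct, then every nonempty stopping set has size at least `D + 2`. -/
theorem disjunct_stopping_distance {m n D : ℕ} (M : Matrix (Fin m) (Fin n) (ZMod 2))
    (hM : Disjunct M D) (V : Finset (Fin n)) (hV : V.Nonempty) (hstop : IsStoppingSet M V) :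
    D + 2 ≤ V.card := by
  by_contra h
  push_neg at h
  obtain ⟨j, hj⟩ := hV
  have hT : (V.erase j).card ≤ D := by
    have := Finset.card_erase_of_mem hj
    omega
  obtain ⟨i, h1, h0⟩ := hM j (V.erase j) (Finset.notMem_erase j V) hT
  apply hstop i
  have : V.filter (fun j' => M i j' = 1) = {j} := by
    ext x
    simp only [Finset.mem_filter, Finset.mem_singleton]
    constructor
    · rintro ⟨hxV, hx1⟩
      by_contra hne
      have := h0 x (Finset.mem_erase.mpr ⟨hne, hxV⟩)
      rw [this] at hx1
      exact one_ne_zero hx1.symm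
    · rintro rfl; exact ⟨hj, h1⟩
  rw [this, Finset.card_singleton]
end
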